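/- arXiv:1811.11411 — 5 statements merged into one kernel-verified Lean document; each statement's English description precedes it below -/
import Mathlib

section
/- If u, v, w are vertices of a tree T with uv and vw edges of T, then 2·f_T(v) > f_T(u) + f_T(w), where f_T(x) is the number of subtrees of T containing x. -/
open SimpleGraph

/-!
Split the connected subgraphs through `u` according to whether they contain `v`. Those that do
not avoid `w` as well (in an acyclic graph `v` separates `u` from `w`), and attaching the edge
`uv` sends them injectively to subgraphs through `u` and `v` avoiding `w`. Hence, with `X` and
`Y` the connected subgraphs through `v` meeting `u`, resp. `w`, we get
`f(u) ≤ |X| + |X \ Y|` and `f(w) ≤ |Y| + |Y \ X|`, so `f(u) + f(w) ≤ 2 |X ∪ Y|`; and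
`X ∪ Y` misses the one-vertex subgraph on `v`, so `|X ∪ Y| < f(v)`.
-/

/-- `numContaining G v`: the number of connected subgraphs of `G` containing `v`. -/
noncomputable def numContaining {V : Type*} (G : SimpleGraph V) (v : V) : ℕ :=
  Nat.card {H : G.Subgraph // H.Connected ∧ v ∈ H.verts}

namespace SimpleGraph

variable {V : Type*} {G : SimpleGraph V}

theorem Subgraph.Connected.mem_verts_of_adj_of_adj (hG : G.IsAcyclic) {S : G.Subgraph}
    (hS : S.Connected) {u v w : V} (huv : G.Adj u v) (hvw : G.Adj v w) (huw : u ≠ w)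
    (hu : u ∈ S.verts) (hw : w ∈ S.verts) : v ∈ S.verts := by
  classical
  obtain ⟨p⟩ := hS ⟨u, hu⟩ ⟨w, hw⟩
  have hw_edge : w ∉ (Walk.cons huv .nil).support := by simp [huw.symm, hvw.ne']
  have hv : v ∈ (p.map S.hom).bypass.support :=
    hG.mem_support_of_ne_mem_support_of_adj_of_isPath (p.map S.hom).bypass_isPath
      (Path.singleton huv).2 hvw.symm hw_edge
  obtain ⟨x, -, rfl⟩ := List.mem_map.mp <|
    (Walk.support_map _ p) ▸ (p.map S.hom).support_bypass_subset_support hv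
  exact x.2

theorem Subgraph.sup_subgraphOfAdj_deleteVerts {x y : V} (h : G.Adj x y) {S : G.Subgraph}
    (hx : x ∈ S.verts) (hy : y ∉ S.verts) :
    (S ⊔ G.subgraphOfAdj h).deleteVerts {y} = S := by
  ext a b
  · simp only [deleteVerts_verts, verts_sup, subgraphOfAdj_verts]
    grind
  · simp only [deleteVerts_adj, verts_sup, subgraphOfAdj_verts, sup_adj,
      subgraphOfAdj_adj, Sym2.eq_iff]
    grind [Subgraph.Adj.fst_mem, Subgraph.Adj.snd_mem]

theorem Subgraph.injOn_sup_subgraphOfAdj {x y : V} (h : G.Adj x y) :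
    Set.InjOn (· ⊔ G.subgraphOfAdj h) {S | x ∈ S.verts ∧ y ∉ S.verts} :=
  Set.LeftInvOn.injOn (f₁' := (·.deleteVerts {y})) fun _ hS ↦
    sup_subgraphOfAdj_deleteVerts h hS.1 hS.2

theorem Subgraph.Connected.sup_subgraphOfAdj {S : G.Subgraph} (hS : S.Connected) {x y : V}
    (h : G.Adj x y) (hx : x ∈ S.verts) : (S ⊔ G.subgraphOfAdj h).Connected :=
  connected_sup hS.preconnected (subgraphOfAdj_connected h).preconnected ⟨x, hx, by simp⟩

def connectedSubgraphsContaining (G : SimpleGraph V) (x : V) : Set G.Subgraph :=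
  {H | H.Connected ∧ x ∈ H.verts}

theorem numContaining_eq_ncard (G : SimpleGraph V) (x : V) :
    numContaining G x = (G.connectedSubgraphsContaining x).ncard :=
  Nat.card_coe_set_eq _

theorem ncard_connectedSubgraphsContaining_le [Finite V] (hG : G.IsAcyclic) {u v w : V}
    (huv : G.Adj u v) (hvw : G.Adj v w) (huw : u ≠ w) :
    (G.connectedSubgraphsContaining u).ncard ≤
      (G.connectedSubgraphsContaining v ∩ G.connectedSubgraphsContaining u).ncard +
      (G.connectedSubgraphsContaining v ∩
        (G.connectedSubgraphsContaining u \ G.connectedSubgraphsContaining w)).ncard := by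
  rw [← Set.ncard_inter_add_ncard_sdiff_eq_ncard _ (G.connectedSubgraphsContaining v),
    Set.inter_comm]
  refine Nat.add_le_add_left (Set.ncard_le_ncard_of_injOn (· ⊔ G.subgraphOfAdj huv) ?_ ?_) _
  · rintro S ⟨⟨hS, hu⟩, hSv⟩
    have hv : v ∉ S.verts := fun hv ↦ hSv ⟨hS, hv⟩
    have hw : w ∉ S.verts := fun hw ↦ hv (hS.mem_verts_of_adj_of_adj hG huv hvw huw hu hw)
    have hS' := hS.sup_subgraphOfAdj huv hu
    refine ⟨⟨hS', by simp⟩, ⟨hS', by simp⟩, fun ⟨_, hw'⟩ ↦ ?_⟩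
    simp only [Subgraph.verts_sup, subgraphOfAdj_verts, Set.mem_union, Set.mem_insert_iff,
      Set.mem_singleton_iff] at hw'
    exact hw'.elim hw (·.elim huw.symm hvw.ne')
  · refine (Subgraph.injOn_sup_subgraphOfAdj huv).mono ?_
    rintro S ⟨⟨hS, hu⟩, hSv⟩
    exact ⟨hu, fun hv ↦ hSv ⟨hS, hv⟩⟩

end SimpleGraph

/-- If `u, v, w` are three vertices of a tree `T` with `uv` and `vw` edges, then
`2 f_T(v) > f_T(u) + f_T(w)`. -/
theorem subtree_count_concave {V : Type*} [Fintype V] (G : SimpleGraph V)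
    (hT : G.IsTree) (u v w : V) (huw : u ≠ w)
    (huv : G.Adj u v) (hvw : G.Adj v w) :
    numContaining G u + numContaining G w < 2 * numContaining G v := by
  simp only [numContaining_eq_ncard]
  have hu := ncard_connectedSubgraphsContaining_le hT.isAcyclic huv hvw huw
  have hw := ncard_connectedSubgraphsContaining_le hT.isAcyclic hvw.symm huv.symm huw.symm
  set C := G.connectedSubgraphsContaining
  rw [Set.inter_sdiff_distrib_left] at hu hw
  have hXY := Set.ncard_sdiff_add_ncard (C v ∩ C u) (C v ∩ C w)
  have hYX := Set.ncard_sdiff_add_ncard (C v ∩ C w) (C v ∩ C u)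
  have hlt : (C v ∩ C u ∪ C v ∩ C w).ncard < (C v).ncard := by
    refine Set.ncard_lt_ncard <| (Set.ssubset_iff_of_subset <|
      Set.union_subset Set.inter_subset_left Set.inter_subset_left).2
        ⟨G.singletonSubgraph v, ⟨Subgraph.singletonSubgraph_connected, rfl⟩, ?_⟩
    rintro (⟨-, -, hu'⟩ | ⟨-, -, hw'⟩)
    exacts [huv.ne hu', hvw.ne' hw']
  rw [Set.union_comm] at hYX
  omega
end

section
/- Among all connected graphs G on n vertices, F(G) is maximized by the complete graph K_n and minimized by the path P_n; moreover n(n+1)/2 ≤ F(G) ≤ Σ_{i=1}^n C(n,i)·h_i, where h_i is the number of connected labeled graphs on i vertices. -/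
open SimpleGraph

/-- The core index of a graph `G`: the number of connected subgraphs of `G`. -/
noncomputable def coreIndex {V : Type*} (G : SimpleGraph V) : ℕ :=
  Nat.card {H : G.Subgraph // H.Connected}

/-- `numConnectedGraphs i`: the number of connected labeled graphs on `i` vertices. -/
noncomputable def numConnectedGraphs (i : ℕ) : ℕ :=
  Nat.card {G : SimpleGraph (Fin i) // G.Connected}

/-!
Two vertices of a shortest walk whose distance is the length of the walk are its endpoints, so in
a connected graph the shortest walks between the `n(n+1)/2` pairs `{u, v}` of (not necessarily
distinct) vertices span pairwise distinct connected subgraphs. In the path `P_n` a connected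
subgraph is the induced subpath on an interval, so `P_n` has at most (in fact exactly) that many.
For the upper bounds, a copy of `G` inside `K_n` maps connected subgraphs injectively, and a
connected subgraph is determined by its vertex set `S` together with a connected graph on `S`.
-/

namespace SimpleGraph

variable {V W : Type*} {G : SimpleGraph V}

theorem Walk.sym2_eq_of_length_le_dist {u v x y : V} (p : G.Walk u v) (hx : x ∈ p.support)
    (hy : y ∈ p.support) (hd : p.length ≤ G.dist x y) : s(x, y) = s(u, v) := by
  classical
  have hp := congrArg Walk.length (p.take_spec hx)
  rw [Walk.length_append] at hp
  rw [← p.take_spec hx, Walk.mem_support_append_iff] at hy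
  rcases hy with hy | hy
  · set q := p.takeUntil x hx
    have hq := congrArg Walk.length (q.take_spec hy)
    rw [Walk.length_append] at hq
    have hyx := dist_le (q.dropUntil y hy)
    rw [dist_comm] at hyx
    obtain rfl : u = y := Walk.eq_of_length_eq_zero (p := q.takeUntil y hy) (by omega)
    obtain rfl : x = v := Walk.eq_of_length_eq_zero (p := p.dropUntil x hx) (by omega)
    exact Sym2.eq_swap
  · set q := p.dropUntil x hx
    have hq := congrArg Walk.length (q.take_spec hy)
    rw [Walk.length_append] at hq
    have hxy := dist_le (q.takeUntil y hy)
    obtain rfl : u = x := Walk.eq_of_length_eq_zero (p := p.takeUntil x hx) (by omega)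
    obtain rfl : y = v := Walk.eq_of_length_eq_zero (p := q.dropUntil y hy) (by omega)
    rfl

theorem Walk.sym2_eq_of_toSubgraph_eq {u v u' v' : V} (p : G.Walk u v) (q : G.Walk u' v')
    (hp : p.length = G.dist u v) (hq : q.length = G.dist u' v')
    (h : p.toSubgraph = q.toSubgraph) : s(u, v) = s(u', v') := by
  wlog hpq : p.length ≤ q.length generalizing u v u' v'
  · exact (this q p hq hp h.symm (le_of_not_ge hpq)).symm
  have hsupp {z : V} (hz : z ∈ q.support) : z ∈ p.support := by
    rwa [← Walk.mem_verts_toSubgraph, h, Walk.mem_verts_toSubgraph]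
  exact (p.sym2_eq_of_length_le_dist (hsupp q.start_mem_support) (hsupp q.end_mem_support)
    (hpq.trans hq.le)).symm

theorem Walk.mk_mem_edges_pathGraph {n : ℕ} {x y c d : Fin n} (p : (pathGraph n).Walk x y)
    (hcd : c.val + 1 = d.val) (hx : x ≤ c) (hy : d ≤ y) : s(c, d) ∈ p.edges := by
  induction p with
  | nil => omega
  | @cons x z y hxz p ih =>
    rw [Walk.edges_cons]
    by_cases hz : z ≤ c
    · exact List.mem_cons_of_mem _ (ih hz hy)
    · obtain rfl : x = c := by rcases pathGraph_adj.mp hxz with h | h <;> omega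
      obtain rfl : z = d := by rcases pathGraph_adj.mp hxz with h | h <;> omega
      exact List.mem_cons_self

theorem Walk.mem_support_pathGraph {n : ℕ} {x y c : Fin n} (p : (pathGraph n).Walk x y)
    (hx : x ≤ c) (hy : c ≤ y) : c ∈ p.support := by
  rcases hy.lt_or_eq with hcy | rfl
  · exact p.fst_mem_support_of_mem_edges
      (p.mk_mem_edges_pathGraph (d := ⟨c + 1, by omega⟩) rfl hx hcy)
  · exact p.end_mem_support

theorem Subgraph.Connected.eq_induce_Icc {n : ℕ} {H : (pathGraph n).Subgraph}
    (hH : H.Connected) {a b : Fin n} (ha : a ∈ H.verts) (hb : b ∈ H.verts)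
    (hab : H.verts ⊆ Set.Icc a b) : H = (⊤ : (pathGraph n).Subgraph).induce (Set.Icc a b) := by
  obtain ⟨p, hp⟩ := (H.connected_iff_forall_exists_walk_subgraph.mp hH).2 ha hb
  have hverts : H.verts = Set.Icc a b := hab.antisymm fun c hc =>
    hp.1 (p.mem_verts_toSubgraph.mpr (p.mem_support_pathGraph hc.1 hc.2))
  have hadj {c d : Fin n} (hcd : c.val + 1 = d.val) (hc : c ∈ Set.Icc a b)
      (hd : d ∈ Set.Icc a b) : H.Adj c d :=
    hp.2 <| Subgraph.mem_edgeSet.mp <|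
      p.mem_edges_toSubgraph.mpr (p.mk_mem_edges_pathGraph hcd hc.1 hd.2)
  refine Subgraph.ext hverts <|
    funext₂ fun c d => propext ⟨fun h => ?_, fun ⟨hc, hd, h⟩ => ?_⟩
  · exact ⟨hverts ▸ H.edge_vert h, hverts ▸ H.edge_vert h.symm, H.adj_sub h⟩
  · rcases pathGraph_adj.mp h with h | h
    · exact hadj h hc hd
    · exact (hadj h hd hc).symm

theorem Subgraph.map_injective {G' : SimpleGraph W} {f : G →g G'} (hf : Function.Injective f) :
    Function.Injective (Subgraph.map f) := by
  intro H H' h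
  refine Subgraph.ext (Set.image_injective.mpr hf (congrArg Subgraph.verts h)) ?_
  funext u v
  simpa only [Subgraph.map_adj, Relation.map_apply, hf.eq_iff, exists_eq_right_right,
    exists_eq_right, eq_iff_iff] using congrArg (fun K : G'.Subgraph => K.Adj (f u) (f v)) h

theorem Subgraph.sigma_mk_coe_injective :
    Function.Injective fun H : G.Subgraph =>
      (⟨H.verts, H.coe⟩ : Σ s : Set V, SimpleGraph s) := by
  intro H H' h
  refine Subgraph.ext (congrArg Sigma.fst h) ?_
  have hadj (K : G.Subgraph) :
      K.Adj = fun a b =>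
        ∃ (ha : a ∈ K.verts) (hb : b ∈ K.verts), K.coe.Adj ⟨a, ha⟩ ⟨b, hb⟩ :=
    funext₂ fun _ _ =>
      propext ⟨fun h => ⟨K.edge_vert h, K.edge_vert h.symm, h⟩, fun ⟨_, _, h⟩ => h⟩
  rw [hadj H, hadj H']
  exact congrArg (fun x : Σ s : Set V, SimpleGraph s =>
    fun a b => ∃ (ha : a ∈ x.1) (hb : b ∈ x.1), x.2.Adj ⟨a, ha⟩ ⟨b, hb⟩) h

end SimpleGraph

theorem Sym2.natCard_eq (α : Type*) [Fintype α] :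
    Nat.card (Sym2 α) = Fintype.card α * (Fintype.card α + 1) / 2 := by
  rw [Nat.card_eq_fintype_card, Sym2.card, Nat.choose_two_right, Nat.add_sub_cancel,
    Nat.mul_comm]

theorem sum_set_natCard_eq_sum_choose {V M : Type*} [Fintype V] [AddCommMonoid M] (f : ℕ → M) :
    ∑ s : Set V, f (Nat.card s) =
      ∑ i ∈ Finset.range (Fintype.card V + 1), (Fintype.card V).choose i • f i := by
  rw [← Fintype.finsetEquivSet.sum_comp, ← Finset.card_univ, ← Finset.sum_powerset_apply_card,
    Finset.powerset_univ]
  simp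

theorem natCard_connected_eq_numConnectedGraphs (α : Type*) [Finite α] :
    Nat.card {G : SimpleGraph α // G.Connected} = numConnectedGraphs (Nat.card α) :=
  Nat.card_congr <| (Equiv.simpleGraph (Finite.equivFin α)).subtypeEquiv fun G =>
    (Iso.comap (Finite.equivFin α).symm G).connected_iff.symm

theorem numConnectedGraphs_zero : numConnectedGraphs 0 = 0 :=
  Nat.card_eq_zero.mpr <| .inl ⟨fun G => G.2.nonempty.elim Fin.elim0⟩

theorem card_sym2_le_coreIndex {V : Type*} [Finite V] {G : SimpleGraph V} (hG : G.Connected) :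
    Nat.card (Sym2 V) ≤ coreIndex G := by
  choose w hw using hG.exists_walk_length_eq_dist
  refine Nat.card_le_card_of_injective
    (fun s => ⟨(w s.out.1 s.out.2).toSubgraph, (w _ _).toSubgraph_connected⟩) fun s t hst => ?_
  rw [← Quot.out_eq s, ← Quot.out_eq t]
  exact Walk.sym2_eq_of_toSubgraph_eq _ _ (hw _ _) (hw _ _) (congrArg Subtype.val hst)

theorem coreIndex_pathGraph_le (n : ℕ) : coreIndex (pathGraph n) ≤ Nat.card (Sym2 (Fin n)) := by
  let I (s : Sym2 (Fin n)) : (pathGraph n).Subgraph :=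
    (⊤ : Subgraph _).induce (Set.Icc s.inf s.sup)
  have hI (H : {H : (pathGraph n).Subgraph // H.Connected}) : H.1 ∈ Set.range I := by
    obtain ⟨H, hH⟩ := H
    obtain ⟨a, ha, hmin⟩ := H.verts.exists_min_image id H.verts.toFinite hH.nonempty
    obtain ⟨b, hb, hmax⟩ := H.verts.exists_max_image id H.verts.toFinite hH.nonempty
    have hab : a ≤ b := hmin b hb
    refine ⟨s(a, b), ?_⟩
    change I s(a, b) = H
    rw [hH.eq_induce_Icc ha hb fun c hc => ⟨hmin c hc, hmax c hc⟩]
    simp [I, hab]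
  calc coreIndex (pathGraph n) ≤ Nat.card (Set.range I) :=
        Nat.card_le_card_of_injective (fun H => ⟨H.1, hI H⟩)
          fun H H' h => Subtype.ext (congrArg (fun K : Set.range I => K.1) h)
    _ ≤ Nat.card (Sym2 (Fin n)) := Finite.card_range_le I

theorem coreIndex_mono {V W : Type*} [Finite W] {G : SimpleGraph V} {G' : SimpleGraph W}
    (h : G ⊑ G') : coreIndex G ≤ coreIndex G' := by
  obtain ⟨f⟩ := h
  have hconn (H : G.Subgraph) (hH : H.Connected) : (H.map f.toHom).Connected :=
    Subgraph.connected_iff'.mpr ((f.isoSubgraphMap H).connected_iff.mp hH.coe)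
  exact Nat.card_le_card_of_injective (fun H => ⟨H.1.map f.toHom, hconn H.1 H.2⟩)
    fun H H' h => Subtype.ext (Subgraph.map_injective f.injective (congrArg Subtype.val h))

theorem coreIndex_le_sum_choose_mul_numConnectedGraphs {V : Type*} [Fintype V]
    (G : SimpleGraph V) :
    coreIndex G ≤ ∑ i ∈ Finset.Icc 1 (Fintype.card V),
      (Fintype.card V).choose i * numConnectedGraphs i := by
  calc coreIndex G ≤ Nat.card (Σ s : Set V, {g : SimpleGraph s // g.Connected}) :=
        Nat.card_le_card_of_injective (fun H => ⟨H.1.verts, H.1.coe, H.2⟩) <|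
          Function.Injective.of_comp (f := Sigma.map id fun _ => Subtype.val)
            (Subgraph.sigma_mk_coe_injective.comp Subtype.val_injective)
    _ = ∑ s : Set V, numConnectedGraphs (Nat.card s) := by
        rw [Nat.card_sigma]
        exact Fintype.sum_congr _ _ fun s => natCard_connected_eq_numConnectedGraphs s
    _ = ∑ i ∈ Finset.range (Fintype.card V + 1),
          (Fintype.card V).choose i • numConnectedGraphs i := sum_set_natCard_eq_sum_choose _
    _ = _ := by
        rw [Finset.range_eq_Ico, Finset.sum_eq_sum_Ico_succ_bot (Nat.succ_pos _),
          numConnectedGraphs_zero, smul_zero, zero_add]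
        rfl

/-- Among all connected graphs on `n` vertices, the core index is maximized by the
complete graph `K_n` and minimized by the path `P_n`; moreover
`n(n+1)/2 ≤ F(G) ≤ ∑_{i=1}^{n} C(n,i) h_i`. -/
theorem connected_coreIndex_bounds {V : Type*} [Fintype V] (G : SimpleGraph V) (n : ℕ)
    (hn : Fintype.card V = n) (hG : G.Connected) :
    coreIndex (pathGraph n) ≤ coreIndex G ∧
    coreIndex G ≤ coreIndex (⊤ : SimpleGraph (Fin n)) ∧
    n * (n + 1) / 2 ≤ coreIndex G ∧
    coreIndex G ≤ ∑ i ∈ Finset.Icc 1 n, n.choose i * numConnectedGraphs i := by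
  have hlower : n * (n + 1) / 2 ≤ coreIndex G := by
    rw [← hn, ← Sym2.natCard_eq]
    exact card_sym2_le_coreIndex hG
  have hG_le_top : G ⊑ (⊤ : SimpleGraph (Fin n)) :=
    isContained_top_iff.mpr ⟨(Fintype.equivFinOfCardEq hn).toEmbedding⟩
  refine ⟨?_, coreIndex_mono hG_le_top, hlower,
    hn ▸ coreIndex_le_sum_choose_mul_numConnectedGraphs G⟩
  calc coreIndex (pathGraph n) ≤ Nat.card (Sym2 (Fin n)) := coreIndex_pathGraph_le n
    _ = n * (n + 1) / 2 := by rw [Sym2.natCard_eq, Fintype.card_fin]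
    _ ≤ coreIndex G := hlower
end

section
/- For integers 2 ≤ l ≤ m, F(K_l ∪ K_m) < F(K_{l-1} ∪ K_{m+1}), where the union denotes disjoint union. -/
open SimpleGraph

/-! Connected subgraphs of a disjoint union lie on one side, so `F` is additive; splitting the
connected subgraphs of `K_{n+1}` by whether they contain the vertex `0` gives
`F(K_{n+1}) = F(K_n) + c(n+1)`, with `c(n)` the number of connected subgraphs of `K_n` through `0`.
The claim becomes `c(l) < c(m+1)`: pushing subgraphs forward along `K_l ↪ K_{m+1}` is injective
and misses `K_{m+1}` itself. -/

theorem Nat.card_subtype_eq_card_and_add_card_and_not {α : Type*} [Finite α] (p q : α → Prop) :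
    Nat.card {x // p x} = Nat.card {x // p x ∧ q x} + Nat.card {x // p x ∧ ¬ q x} := by
  classical
  rw [← Nat.card_congr (Equiv.subtypeSubtypeEquivSubtypeInter p q),
    ← Nat.card_congr (Equiv.subtypeSubtypeEquivSubtypeInter p (¬ q ·)), ← Nat.card_sum,
    Nat.card_congr (Equiv.sumCompl fun x : {x // p x} => q x)]

namespace SimpleGraph

variable {V W : Type*} {G : SimpleGraph V} {G' : SimpleGraph W}

namespace Subgraph

lemma map_adj_apply_iff (f : G ↪g G') (H : G.Subgraph) {a b : V} :
    (H.map f.toHom).Adj (f a) (f b) ↔ H.Adj a b := by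
  constructor
  · rintro ⟨u, v, h, hu, hv⟩
    rwa [f.injective hu, f.injective hv] at h
  · exact fun h => ⟨a, b, h, rfl, rfl⟩

noncomputable def mapIso (f : G ↪g G') (H : G.Subgraph) : H.coe ≃g (H.map f.toHom).coe where
  toEquiv := Equiv.Set.image f H.verts f.injective
  map_rel_iff' := map_adj_apply_iff f H

lemma connected_map_iff (f : G ↪g G') (H : G.Subgraph) :
    (H.map f.toHom).Connected ↔ H.Connected := by
  rw [Subgraph.connected_iff', Subgraph.connected_iff', (mapIso f H).connected_iff]

lemma comap_map_of_embedding (f : G ↪g G') (H : G.Subgraph) :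
    (H.map f.toHom).comap f.toHom = H := by
  ext a b
  · simp [f.injective.preimage_image]
  · exact ⟨fun h => (map_adj_apply_iff f H).mp h.2,
      fun h => ⟨H.adj_sub h, (map_adj_apply_iff f H).mpr h⟩⟩

lemma map_comap_of_verts_subset_range (f : G ↪g G') {H' : G'.Subgraph}
    (h : H'.verts ⊆ Set.range f) : (H'.comap f.toHom).map f.toHom = H' := by
  ext x y
  · exact Set.ext_iff.mp (Set.image_preimage_eq_of_subset h) x
  · refine ⟨fun ⟨a, b, ⟨_, hab⟩, hax, hby⟩ => hax ▸ hby ▸ hab, fun hxy => ?_⟩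
    obtain ⟨a, rfl⟩ := h (H'.edge_vert hxy)
    obtain ⟨b, rfl⟩ := h (H'.edge_vert hxy.symm)
    exact ⟨a, b, ⟨f.map_rel_iff.mp (H'.adj_sub hxy), hxy⟩, rfl, rfl⟩

lemma map_injective_of_embedding (f : G ↪g G') : Function.Injective (Subgraph.map f.toHom) :=
  fun H₁ H₂ h => by rw [← comap_map_of_embedding f H₁, h, comap_map_of_embedding]

lemma Connected.verts_subset_range_inl_or_inr {H : (G ⊕g G').Subgraph} (hH : H.Connected) :
    H.verts ⊆ Set.range Sum.inl ∨ H.verts ⊆ Set.range Sum.inr := by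
  by_contra! ⟨hl, hr⟩
  obtain ⟨a, ha, ha'⟩ := Set.not_subset.mp hl
  obtain ⟨b, hb, hb'⟩ := Set.not_subset.mp hr
  rw [← Set.mem_compl_iff, Set.compl_range_inl] at ha'
  rw [← Set.mem_compl_iff, Set.compl_range_inr] at hb'
  obtain ⟨y, rfl⟩ := ha'
  obtain ⟨x, rfl⟩ := hb'
  exact not_reachable_sum_inl_inr x y ((hH.preconnected ⟨_, hb⟩ ⟨_, ha⟩).map H.hom)

end Subgraph

noncomputable def Embedding.connectedSubgraphEquiv (f : G ↪g G') :
    {H : G.Subgraph // H.Connected} ≃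
      {H' : G'.Subgraph // H'.Connected ∧ H'.verts ⊆ Set.range f} where
  toFun H := ⟨H.1.map f.toHom, (Subgraph.connected_map_iff f H.1).mpr H.2,
    Set.image_subset_range _ _⟩
  invFun H' := ⟨H'.1.comap f.toHom, by
    rw [← Subgraph.connected_map_iff f, Subgraph.map_comap_of_verts_subset_range f H'.2.2]
    exact H'.2.1⟩
  left_inv H := Subtype.ext (Subgraph.comap_map_of_embedding f H.1)
  right_inv H' := Subtype.ext (Subgraph.map_comap_of_verts_subset_range f H'.2.2)

end SimpleGraph

open SimpleGraph

variable {V W : Type*} {G : SimpleGraph V} {G' : SimpleGraph W}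

lemma coreIndex_eq_card_connected_verts_subset_range (f : G ↪g G') :
    coreIndex G = Nat.card {H' : G'.Subgraph // H'.Connected ∧ H'.verts ⊆ Set.range f} :=
  Nat.card_congr f.connectedSubgraphEquiv

theorem coreIndex_sum [Finite V] [Finite W] :
    coreIndex (G ⊕g G') = coreIndex G + coreIndex G' := by
  have hside (H : (G ⊕g G').Subgraph) (hH : H.Connected) :
      ¬ H.verts ⊆ Set.range Sum.inl ↔ H.verts ⊆ Set.range Sum.inr := by
    refine ⟨hH.verts_subset_range_inl_or_inr.resolve_left, fun hr hl => ?_⟩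
    obtain ⟨v, hv⟩ := hH.nonempty
    exact Set.isCompl_range_inl_range_inr.disjoint.ne_of_mem (hl hv) (hr hv) rfl
  rw [coreIndex,
    Nat.card_subtype_eq_card_and_add_card_and_not _ fun H => H.verts ⊆ Set.range Sum.inl,
    Nat.card_congr (Equiv.subtypeEquivRight fun H => and_congr_right (hside H)),
    coreIndex_eq_card_connected_verts_subset_range (Embedding.sumInl (G := G) (H := G')),
    coreIndex_eq_card_connected_verts_subset_range (Embedding.sumInr (G := G) (H := G'))]
  rfl

theorem coreIndex_eq_add_card_connected_mem_verts [Finite W] (f : G ↪g G') (w : W)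
    (hf : Set.range f = {w}ᶜ) :
    coreIndex G' = coreIndex G + Nat.card {H : G'.Subgraph // H.Connected ∧ w ∈ H.verts} := by
  rw [coreIndex, Nat.card_subtype_eq_card_and_add_card_and_not _ fun H => w ∈ H.verts, add_comm,
    coreIndex_eq_card_connected_verts_subset_range f, hf]
  simp_rw [Set.subset_compl_singleton_iff]

theorem card_connected_mem_verts_lt [Finite W] (f : G ↪g G') (hf : ¬ Function.Surjective f)
    (hG' : G'.Connected) (v : V) :
    Nat.card {H : G.Subgraph // H.Connected ∧ v ∈ H.verts} <
      Nat.card {H : G'.Subgraph // H.Connected ∧ f v ∈ H.verts} := by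
  have := Finite.of_injective f f.injective
  have := Fintype.ofFinite {H : G.Subgraph // H.Connected ∧ v ∈ H.verts}
  have := Fintype.ofFinite {H : G'.Subgraph // H.Connected ∧ f v ∈ H.verts}
  let φ (H : {H : G.Subgraph // H.Connected ∧ v ∈ H.verts}) :
      {H : G'.Subgraph // H.Connected ∧ f v ∈ H.verts} :=
    ⟨H.1.map f.toHom, (Subgraph.connected_map_iff f H.1).mpr H.2.1,
      Set.mem_image_of_mem f H.2.2⟩
  have hφ : Function.Injective φ := fun H₁ H₂ h =>
    Subtype.ext (Subgraph.map_injective_of_embedding f (congrArg Subtype.val h))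
  have htop : (⊤ : G'.Subgraph).Connected := by
    rwa [Subgraph.connected_iff', Subgraph.topIso.connected_iff]
  simp only [Nat.card_eq_fintype_card]
  refine Fintype.card_lt_of_injective_of_notMem φ hφ (b := ⟨⊤, htop, trivial⟩) ?_
  rintro ⟨H, hH⟩
  refine hf fun w => ?_
  have hw : w ∈ (φ H).1.verts := by rw [hH]; trivial
  obtain ⟨u, -, rfl⟩ := hw
  exact ⟨u, rfl⟩

theorem coreIndex_completeGraph_succ (n : ℕ) (w : Fin (n + 1)) :
    coreIndex (⊤ : SimpleGraph (Fin (n + 1))) = coreIndex (⊤ : SimpleGraph (Fin n)) +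
      Nat.card {H : (⊤ : SimpleGraph (Fin (n + 1))).Subgraph // H.Connected ∧ w ∈ H.verts} :=
  coreIndex_eq_add_card_connected_mem_verts (Embedding.completeGraph w.succAboveEmb) w
    (Fin.range_succAbove w)

/-- For `2 ≤ l ≤ m`, `F(K_l ∪ K_m) < F(K_{l-1} ∪ K_{m+1})`, where `∪` is disjoint
union. -/
theorem coreIndex_complete_union_lt (l m : ℕ) (hl : 2 ≤ l) (hlm : l ≤ m) :
    coreIndex ((⊤ : SimpleGraph (Fin l)) ⊕g (⊤ : SimpleGraph (Fin m))) <
    coreIndex ((⊤ : SimpleGraph (Fin (l - 1))) ⊕g (⊤ : SimpleGraph (Fin (m + 1)))) := by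
  obtain ⟨k, rfl⟩ : ∃ k, l = k + 1 := ⟨l - 1, by omega⟩
  have hkm : k + 1 ≤ m + 1 := by omega
  have hnot : ¬ Function.Surjective (Fin.castLE hkm) := fun h => by
    obtain ⟨x, hx⟩ := h (Fin.last m)
    have := congrArg Fin.val hx
    simp only [Fin.val_castLE, Fin.val_last] at this
    omega
  have hcard :=
    card_connected_mem_verts_lt (Embedding.completeGraph (Fin.castLEEmb hkm)) hnot connected_top 0
  simp only [completeGraph_eq_top, Embedding.coe_completeGraph, Fin.castLEEmb_apply,
    Fin.castLE_zero] at hcard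
  rw [Nat.add_sub_cancel, coreIndex_sum, coreIndex_sum, coreIndex_completeGraph_succ k 0,
    coreIndex_completeGraph_succ m 0]
  omega
end

section
/- If G is an acyclic graph on n vertices with k connected components, then F(G) ≤ 2^{n-k} + n - 1, with equality if and only if G is the disjoint union of k-1 isolated vertices and the star K_{1,n-k}. -/
open SimpleGraph

/-- The star `K_{1,m}` on `m + 1` vertices: vertex `0` is the center. -/
def starGraph (m : ℕ) : SimpleGraph (Fin (m + 1)) :=
  SimpleGraph.fromRel (fun i _ => i = 0)

/-!
A connected subgraph is either a single vertex or is determined by its nonempty edge set, so a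
graph with `n` vertices and `m` edges has at most `n + 2^m - 1` of them; a forest with `k`
components has `m = n - k`. Equality forces every nonempty set of edges to span a connected
subgraph. Applied to pairs of edges, this says that any two edges meet, and pairwise meeting edges
of a triangle-free graph all pass through one vertex: `G` is a star plus isolated vertices.
Conversely, every nonempty edge set of such a graph spans a connected subgraph.
-/

namespace SimpleGraph

variable {V : Type*} {G : SimpleGraph V}

theorem IsAcyclic.card_edgeSet_add_card_connectedComponent [Finite V] (h : G.IsAcyclic) :
    Nat.card G.edgeSet + Nat.card G.ConnectedComponent = Nat.card V := by
  classical
  have := Fintype.ofFinite V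
  let edgesIn (c : G.ConnectedComponent) := G.edgeFinset ∩ c.supp.toFinset.sym2
  have tree (c : G.ConnectedComponent) : (edgesIn c).card + 1 = Fintype.card c.supp := by
    rw [show edgesIn c = _ from (map_edgeFinset_induce (s := c.supp)).symm, Finset.card_map]
    convert (h.isTree_connectedComponent c).card_edgeFinset <;> rfl
  have edges : G.edgeFinset = Finset.univ.biUnion edgesIn := by
    ext e
    induction e with
    | h u v =>
      simp only [edgesIn, Finset.mem_biUnion, Finset.mem_univ, true_and, Finset.mem_inter,
        Finset.mk_mem_sym2_iff, Set.mem_toFinset, ConnectedComponent.mem_supp_iff]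
      refine ⟨fun he ↦ ⟨G.connectedComponentMk u, he, rfl, ?_⟩, fun ⟨_, he, _⟩ ↦ he⟩
      exact (ConnectedComponent.sound (G.mem_edgeFinset.mp he).reachable).symm
  have disjoint :
      ((Finset.univ : Finset G.ConnectedComponent) : Set _).PairwiseDisjoint edgesIn := by
    intro c _ d _ hcd
    refine Finset.disjoint_left.mpr fun e hc hd ↦ hcd ?_
    induction e with
    | h u v =>
      simp only [edgesIn, Finset.mem_inter, Finset.mk_mem_sym2_iff, Set.mem_toFinset] at hc hd
      exact ConnectedComponent.eq_of_common_vertex hc.2.1 hd.2.1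
  have verts : ∑ c : G.ConnectedComponent, Fintype.card c.supp = Fintype.card V := by
    rw [← Fintype.card_sigma]
    exact Fintype.card_congr (Equiv.sigmaFiberEquiv G.connectedComponentMk)
  rw [Nat.card_eq_fintype_card, ← edgeFinset_card, edges, Finset.card_biUnion disjoint,
    Nat.card_eq_fintype_card, Nat.card_eq_fintype_card, ← verts, ← Finset.card_univ]
  simp_rw [← tree, Finset.sum_add_distrib]
  simp

namespace Subgraph

theorem Connected.verts_eq_support {H : G.Subgraph} (hH : H.Connected)
    (hV : H.verts.Nontrivial) : H.verts = H.support := by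
  refine subset_antisymm (fun v hv ↦ ?_) H.support_subset_verts
  have := hV.coe_sort
  exact hH.preconnected.exists_adj_of_nontrivial ⟨v, hv⟩

theorem Connected.eq_singletonSubgraph {H : G.Subgraph} (hH : H.Connected)
    (he : H.edgeSet = ∅) {v : V} (hv : v ∈ H.verts) : H = G.singletonSubgraph v := by
  refine (eq_singletonSubgraph_iff_verts_eq H).mpr ?_
  refine Set.Subsingleton.eq_singleton_of_mem (fun x hx y hy ↦ ?_) hv
  by_contra hxy
  obtain ⟨w, hw⟩ := (hH.verts_eq_support ⟨x, hx, y, hy, hxy⟩ ▸ hx :)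
  exact he.subset (H.mem_edgeSet.mpr hw)

theorem Connected.eq_of_edgeSet_eq {H₁ H₂ : G.Subgraph} (h₁ : H₁.Connected) (h₂ : H₂.Connected)
    (he : H₁.edgeSet = H₂.edgeSet) (hne : H₁.edgeSet.Nonempty) : H₁ = H₂ := by
  have hadj : H₁.Adj = H₂.Adj := by
    ext u v
    rw [← Subgraph.mem_edgeSet, he, Subgraph.mem_edgeSet]
  have nontrivial {H : G.Subgraph} (hne : H.edgeSet.Nonempty) : H.verts.Nontrivial := by
    obtain ⟨⟨u, v⟩, huv⟩ := hne
    exact ⟨u, H.edge_vert huv, v, H.edge_vert huv.symm, huv.ne⟩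
  refine Subgraph.ext ?_ hadj
  rw [h₁.verts_eq_support (nontrivial hne), h₂.verts_eq_support (nontrivial (he ▸ hne)),
    support, support, hadj]

theorem Connected.exists_mem_of_edgeSet_eq_pair {H : G.Subgraph} (hH : H.Connected)
    {e f : Sym2 V} (hef : H.edgeSet = {e, f}) : ∃ v, v ∈ e ∧ v ∈ f := by
  by_contra! hdisj
  have he : e ∈ H.edgeSet := hef ▸ Set.mem_insert e {f}
  have hf : f ∈ H.edgeSet := hef ▸ Set.mem_insert_of_mem e rfl
  obtain ⟨x, hx⟩ : ∃ x, x ∈ e := ⟨e.out.1, Sym2.out_fst_mem e⟩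
  obtain ⟨y, hy⟩ : ∃ y, y ∈ f := ⟨f.out.1, Sym2.out_fst_mem f⟩
  obtain ⟨p⟩ := hH ⟨x, H.mem_verts_of_mem_edge he hx⟩ ⟨y, H.mem_verts_of_mem_edge hf hy⟩
  obtain ⟨d, -, hd_in, hd_out⟩ :=
    p.exists_boundary_dart {w : H.verts | w.1 ∈ e} hx (fun hye ↦ hdisj y hye hy)
  have hd : s(d.fst.1, d.snd.1) ∈ H.edgeSet := H.mem_edgeSet.mpr d.adj
  rw [hef] at hd
  rcases hd with hd | hd
  · exact hd_out (hd ▸ Sym2.mem_mk_right _ _)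
  · exact hdisj _ hd_in (hd ▸ Sym2.mem_mk_left _ _)

end Subgraph

open Classical in
/-- The extra point `none` takes the code `∅`, which no connected subgraph uses. -/
noncomputable def connectedSubgraphCode (G : SimpleGraph V) :
    Option {H : G.Subgraph // H.Connected} → V ⊕ 𝒫 G.edgeSet
  | none => .inr ⟨∅, Set.empty_subset _⟩
  | some H => if H.1.edgeSet = ∅ then .inl H.2.nonempty.some
      else .inr ⟨H.1.edgeSet, H.1.edgeSet_subset⟩

theorem connectedSubgraphCode_injective (G : SimpleGraph V) :
    Function.Injective (connectedSubgraphCode G) := by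
  rintro (_ | ⟨H₁, h₁⟩) (_ | ⟨H₂, h₂⟩) h <;> simp only [connectedSubgraphCode] at h
  · rfl
  · split_ifs at h with e₂
    exact (e₂ (congrArg Subtype.val (Sum.inr_injective h)).symm).elim
  · split_ifs at h with e₁
    exact (e₁ (congrArg Subtype.val (Sum.inr_injective h))).elim
  · congr
    split_ifs at h with e₁ e₂ e₂ <;> simp only [Sum.inl.injEq, Sum.inr.injEq, Subtype.ext_iff] at h
    · exact (h₁.eq_singletonSubgraph e₁ h₁.nonempty.some_mem).trans <| (congrArg _ h).trans
        (h₂.eq_singletonSubgraph e₂ h₂.nonempty.some_mem).symm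
    · exact h₁.eq_of_edgeSet_eq h₂ h (Set.nonempty_iff_ne_empty.mpr e₁)

end SimpleGraph

section CoreIndex

variable {V : Type*} [Finite V]

theorem coreIndex_add_one_le (G : SimpleGraph V) :
    coreIndex G + 1 ≤ Nat.card V + 2 ^ G.edgeSet.ncard := by
  have := Nat.card_le_card_of_injective _ (connectedSubgraphCode_injective G)
  rwa [Finite.card_option, Nat.card_sum, Nat.card_coe_set_eq, Set.ncard_powerset] at this

theorem coreIndex_add_one_eq_iff (G : SimpleGraph V) :
    coreIndex G + 1 = Nat.card V + 2 ^ G.edgeSet.ncard ↔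
      ∀ s ⊆ G.edgeSet, s.Nonempty → ∃ H : G.Subgraph, H.Connected ∧ H.edgeSet = s := by
  have hinj := connectedSubgraphCode_injective G
  rw [coreIndex, ← Finite.card_option, ← Set.ncard_powerset, ← Nat.card_coe_set_eq,
    ← Nat.card_sum, ← (Nat.bijective_iff_injective_and_card _).trans (and_iff_right hinj),
    Function.Bijective, and_iff_right hinj]
  constructor
  · intro hsurj s hs hne
    obtain ⟨_ | ⟨H, hH⟩, hcode⟩ := hsurj (.inr ⟨s, hs⟩) <;>
      simp only [connectedSubgraphCode] at hcode
    · exact (hne.ne_empty (congrArg Subtype.val (Sum.inr_injective hcode)).symm).elim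
    · split_ifs at hcode
      exact ⟨H, hH, congrArg Subtype.val (Sum.inr_injective hcode)⟩
  · rintro h (v | ⟨s, hs⟩)
    · refine ⟨some ⟨G.singletonSubgraph v, Subgraph.singletonSubgraph_connected⟩, ?_⟩
      simp only [connectedSubgraphCode, edgeSet_singletonSubgraph, if_true]
      exact congrArg Sum.inl (Set.Nonempty.some_mem (s := {v}) _)
    · rcases s.eq_empty_or_nonempty with rfl | hne
      · exact ⟨none, rfl⟩
      obtain ⟨H, hH, rfl⟩ := h s hs hne
      exact ⟨some ⟨H, hH⟩, by simp [connectedSubgraphCode, hne.ne_empty]⟩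

end CoreIndex

theorem Equiv.exists_apply_eq_and_mem_iff {α β : Type*} [Finite α] [Finite β] {S : Set α}
    {T : Set β} {a : α} {b : β} (ha : a ∉ S) (hb : b ∉ T) (hcard : Nat.card α = Nat.card β)
    (hST : S.ncard = T.ncard) : ∃ e : α ≃ β, e a = b ∧ ∀ x, e x ∈ T ↔ x ∈ S := by
  classical
  obtain ⟨e₁⟩ := Finite.card_eq.mp hST
  obtain ⟨e₂⟩ : Nonempty (↥Sᶜ ≃ ↥Tᶜ) := by
    rw [← Finite.card_eq, Nat.card_coe_set_eq, Nat.card_coe_set_eq, Set.ncard_compl,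
      Set.ncard_compl, hST, hcard]
  let e₀ : α ≃ β :=
    (Equiv.Set.sumCompl S).symm.trans ((e₁.sumCongr e₂).trans (Equiv.Set.sumCompl T))
  have he₀ (x : α) : e₀ x ∈ T ↔ x ∈ S := by
    by_cases hx : x ∈ S
    · simp [e₀, hx, Equiv.Set.sumCompl_symm_apply_of_mem]
    · simp only [e₀, Equiv.trans_apply, Equiv.Set.sumCompl_symm_apply_of_notMem hx,
        Equiv.sumCongr_apply, Sum.map_inr, Equiv.Set.sumCompl_apply_inr, hx, iff_false]
      exact (e₂ _).2
  refine ⟨e₀.trans (Equiv.swap (e₀ a) b), Equiv.swap_apply_left _ _, fun x ↦ ?_⟩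
  rw [Equiv.trans_apply, Equiv.swap_apply_def]
  split_ifs with h₁ h₂
  · rw [e₀.injective h₁]
    exact iff_of_false hb ha
  · rw [he₀, ← he₀ x, h₂]
    exact iff_of_false ha hb
  · exact he₀ x

namespace SimpleGraph

variable {V W : Type*} {G : SimpleGraph V} {H : SimpleGraph W}

theorem isVertexCover_singleton_iff {a : V} :
    G.IsVertexCover {a} ↔ ∀ e ∈ G.edgeSet, a ∈ e := by
  simp [IsVertexCover, Sym2.forall, eq_comm]

theorem IsVertexCover.adj_iff {a : V} (ha : G.IsVertexCover {a}) {u v : V} :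
    G.Adj u v ↔ u = a ∧ G.Adj a v ∨ v = a ∧ G.Adj a u := by
  refine ⟨fun huv ↦ ?_, ?_⟩
  · rcases ha huv with rfl | rfl
    exacts [Or.inl ⟨rfl, huv⟩, Or.inr ⟨rfl, huv.symm⟩]
  · rintro (⟨rfl, h⟩ | ⟨rfl, h⟩)
    exacts [h, h.symm]

theorem IsVertexCover.ncard_neighborSet {a : V} (ha : G.IsVertexCover {a}) :
    (G.neighborSet a).ncard = G.edgeSet.ncard := by
  classical
  have : G.incidenceSet a = G.edgeSet :=
    (G.incidenceSet_subset a).antisymm fun e he ↦ ⟨he, isVertexCover_singleton_iff.mp ha e he⟩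
  rw [← Nat.card_coe_set_eq, ← Nat.card_coe_set_eq, ← this,
    Nat.card_congr (G.incidenceSetEquivNeighborSet a)]

theorem IsVertexCover.exists_connected_edgeSet_eq {a : V} (ha : G.IsVertexCover {a})
    {s : Set (Sym2 V)} (hs : s ⊆ G.edgeSet) (hne : s.Nonempty) :
    ∃ H : G.Subgraph, H.Connected ∧ H.edgeSet = s := by
  rw [isVertexCover_singleton_iff] at ha
  let H : G.Subgraph :=
    { verts := {v | ∃ e ∈ s, v ∈ e}
      Adj u v := s(u, v) ∈ s
      adj_sub h := G.mem_edgeSet.mp (hs h)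
      edge_vert h := ⟨_, h, Sym2.mem_mk_left _ _⟩
      symm := ⟨fun u v h ↦ by rwa [Sym2.eq_swap]⟩ }
  have haH : a ∈ H.verts := ⟨hne.some, hne.some_mem, ha _ (hs hne.some_mem)⟩
  refine ⟨H, Subgraph.connected_iff.mpr ⟨⟨?_⟩, ⟨a, haH⟩⟩, ?_⟩
  · refine (connected_iff_exists_forall_reachable _).mpr
      ⟨⟨a, haH⟩, fun ⟨w, e, he, hwe⟩ ↦ ?_⟩ |>.preconnected
    obtain rfl | hwa := eq_or_ne w a
    · rfl
    refine Adj.reachable (Adj.symm ?_)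
    show s(w, a) ∈ s
    rwa [← (Sym2.mem_and_mem_iff hwa).mp ⟨hwe, ha e (hs he)⟩]
  · ext e
    induction e with
    | h u v => exact Subgraph.mem_edgeSet

theorem exists_isVertexCover_singleton_of_forall_edges_meet [Nonempty V] (h3 : G.CliqueFree 3)
    (h : ∀ e ∈ G.edgeSet, ∀ f ∈ G.edgeSet, ∃ v, v ∈ e ∧ v ∈ f) : ∃ a, G.IsVertexCover {a} := by
  by_cases hG : G = ⊥
  · exact ⟨Classical.arbitrary V, by simp [hG]⟩
  obtain ⟨u, v, huv⟩ : ∃ u v, G.Adj u v := by simpa [eq_bot_iff_forall_not_adj] using hG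
  by_contra! hno
  have edge_avoiding (a : V) : ∃ x y, G.Adj x y ∧ x ≠ a ∧ y ≠ a := by
    simpa [IsVertexCover] using hno a
  have meet {x y z w : V} (hxy : G.Adj x y) (hzw : G.Adj z w) :
      x = z ∨ x = w ∨ y = z ∨ y = w := by
    simpa [or_and_right, exists_or, or_assoc] using
      h _ (G.mem_edgeSet.mpr hxy) _ (G.mem_edgeSet.mpr hzw)
  have triangle {x y z : V} (hxy : G.Adj x y) (hyz : G.Adj y z) (hxz : G.Adj x z) : False :=
    isIndepSet_neighborSet_of_triangleFree G h3 x hxy hxz hyz.ne hyz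
  obtain ⟨x, y, hxy, hxu, hyu⟩ := edge_avoiding u
  obtain ⟨p, q, hpq, hpv, hqv⟩ := edge_avoiding v
  -- `xy` meets `uv` only at `v`, `pq` meets it only at `u`, and the vertex shared by `xy` and
  -- `pq` closes a triangle with `u` and `v`.
  have := meet huv hxy
  have := meet huv hpq
  have := meet hxy hpq
  grind [Adj.symm, Adj.ne]

theorem IsVertexCover.nonempty_iso [Finite V] [Finite W] {a : V} {b : W}
    (ha : G.IsVertexCover {a}) (hb : H.IsVertexCover {b}) (hcard : Nat.card V = Nat.card W)
    (hdeg : (G.neighborSet a).ncard = (H.neighborSet b).ncard) : Nonempty (G ≃g H) := by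
  obtain ⟨e, hea, he⟩ := Equiv.exists_apply_eq_and_mem_iff G.notMem_neighborSet_self
    H.notMem_neighborSet_self hcard hdeg
  have heb (x : V) : e x = b ↔ x = a := by rw [← hea, e.apply_eq_iff_eq]
  refine ⟨⟨e, fun {u v} ↦ ?_⟩⟩
  rw [ha.adj_iff, hb.adj_iff]
  exact or_congr (and_congr (heb u) (he v)) (and_congr (heb v) (he u))

theorem _root_.starGraph_eq (m : ℕ) : _root_.starGraph m = SimpleGraph.starGraph 0 := rfl

theorem isVertexCover_sum_starGraph (p m : ℕ) :
    ((⊥ : SimpleGraph (Fin p)) ⊕g _root_.starGraph m).IsVertexCover {.inr 0} := by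
  rintro (x | x) (y | y) h <;> simp_all [starGraph_eq]

theorem ncard_neighborSet_sum_starGraph (p m : ℕ) :
    (((⊥ : SimpleGraph (Fin p)) ⊕g _root_.starGraph m).neighborSet (.inr 0)).ncard = m := by
  classical
  rw [neighborSet_sum_inr, Set.ncard_image_of_injective _ Sum.inr_injective, starGraph_eq,
    ← Nat.card_coe_set_eq, Nat.card_eq_fintype_card, card_neighborSet_eq_degree,
    degree_starGraph_center, Fintype.card_fin, Nat.add_sub_cancel]

end SimpleGraph

/-- If `G` is an acyclic graph on `n` vertices with `k` connected components, then
`F(G) ≤ 2^(n-k) + n - 1`, with equality if and only if `G` is the disjoint union of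
`k - 1` isolated vertices and the star `K_{1,n-k}`. -/
theorem coreIndex_acyclic_upper_bound {V : Type*} [Fintype V] (G : SimpleGraph V)
    (n k : ℕ) (hn : Fintype.card V = n) (hk : 1 ≤ k) (hkn : k ≤ n)
    (hacyclic : G.IsAcyclic) (hcomp : Nat.card G.ConnectedComponent = k) :
    coreIndex G ≤ 2 ^ (n - k) + n - 1 ∧
    (coreIndex G = 2 ^ (n - k) + n - 1 ↔
      Nonempty (G ≃g ((⊥ : SimpleGraph (Fin (k - 1))) ⊕g _root_.starGraph (n - k)))) := by
  have hV : Nat.card V = n := Nat.card_eq_fintype_card.trans hn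
  have hE : G.edgeSet.ncard = n - k := by
    have := hacyclic.card_edgeSet_add_card_connectedComponent
    rw [Nat.card_coe_set_eq, hcomp, hV] at this
    omega
  have hle := coreIndex_add_one_le G
  have hequality := coreIndex_add_one_eq_iff G
  rw [hV, hE] at hle hequality
  have hpow : 0 < 2 ^ (n - k) := Nat.two_pow_pos _
  refine ⟨by omega, (show _ ↔ coreIndex G + 1 = n + 2 ^ (n - k) by omega).trans <|
    hequality.trans ⟨fun h ↦ ?_, fun ⟨φ⟩ ↦ ?_⟩⟩
  · have : Nonempty V := Fintype.card_pos_iff.mp (by omega)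
    have hmeet (e) (he : e ∈ G.edgeSet) (f) (hf : f ∈ G.edgeSet) : ∃ v, v ∈ e ∧ v ∈ f := by
      obtain ⟨H, hH, hef⟩ := h {e, f} (Set.insert_subset he (Set.singleton_subset_iff.mpr hf))
        (Set.insert_nonempty e {f})
      exact hH.exists_mem_of_edgeSet_eq_pair hef
    obtain ⟨a, ha⟩ :=
      exists_isVertexCover_singleton_of_forall_edges_meet (hacyclic.cliqueFree le_rfl) hmeet
    refine ha.nonempty_iso (isVertexCover_sum_starGraph _ _) ?_ ?_
    · rw [hV, Nat.card_sum, Nat.card_fin, Nat.card_fin]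
      omega
    · rw [ha.ncard_neighborSet, ncard_neighborSet_sum_starGraph, hE]
  · have hcover := (isVertexCover_image_iso φ.symm).mpr (isVertexCover_sum_starGraph _ _)
    rw [Set.image_singleton] at hcover
    exact fun s hs hne ↦ hcover.exists_connected_edgeSet_eq hs hne
end

section
/- Let G be a connected graph with a bridge {u,v} where neither u nor v is a pendant vertex. Let G' be obtained by contracting the edge {u,v} and attaching a new pendant vertex y at the merged vertex. Then F(G') > F(G). -/
/-!
Merging `v` into `u` maps every connected subgraph `H` of `G` to a connected subgraph of `G'`.
If `H` contains both `u` and `v` it contains the bridge `uv`, which the merge contracts, so the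
pendant edge `uv` is put back; the single vertex `v` is sent to itself, because its image `{u}`
is already taken. Since `u` and `v` have no common neighbour, the edges of `H` can be read off its
image, and a connected subgraph is determined by its edges and one of its vertices, so the map is
injective. It misses the star at `u` with one leaf `a ≠ v` from the neighbourhood of `u` and one
leaf `b ≠ u` from that of `v` (both exist as the degrees are at least two): a preimage would
contain `u` and `v`, so the image would contain `v`.
-/

open SimpleGraph

/-- The graph obtained from `G` by contracting the edge `{u, v}` (the merged vertex is
`u`) and re-using the vertex `v` as a new pendant vertex attached at the merged
vertex. -/
def contractEdgeAddPendant {V : Type*} (G : SimpleGraph V) (u v : V) : SimpleGraph V :=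
  SimpleGraph.fromRel (fun x y =>
    (x ≠ u ∧ x ≠ v ∧ y ≠ u ∧ y ≠ v ∧ G.Adj x y) ∨
    (x = u ∧ y ≠ u ∧ y ≠ v ∧ (G.Adj u y ∨ G.Adj v y)) ∨
    (x = u ∧ y = v))

lemma Finite.card_lt_of_injective_of_notMem {α β : Type*} [Finite β] (f : α → β)
    (hf : Function.Injective f) {b : β} (hb : b ∉ Set.range f) : Nat.card α < Nat.card β := by
  have := Fintype.ofFinite β
  have : Finite α := Finite.of_injective f hf
  have := Fintype.ofFinite α
  simpa only [Nat.card_eq_fintype_card] using Fintype.card_lt_of_injective_of_notMem f hf hb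

namespace SimpleGraph

variable {V W : Type*}

lemma exists_adj_ne_of_two_le_degree {G : SimpleGraph V} [Fintype V] [DecidableRel G.Adj]
    {u : V} (hu : 2 ≤ G.degree u) (w : V) : ∃ a, G.Adj u a ∧ a ≠ w := by
  obtain ⟨a, ha, haw⟩ := Finset.exists_mem_ne hu w
  exact ⟨a, (mem_neighborFinset G u a).mp ha, haw⟩

lemma IsBridge.not_adj_of_adj {G : SimpleGraph V} {u v w : V} (hb : G.IsBridge s(u, v))
    (hu : G.Adj u w) : ¬ G.Adj v w := by
  intro hv
  have := isBridge_iff_forall_walk_mem_edges.mp hb (.cons hu (.cons hv.symm .nil))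
  simp only [Walk.edges_cons, Walk.edges_nil, List.mem_cons, List.not_mem_nil, or_false,
    Sym2.eq_iff] at this
  grind [hu.ne, hv.ne]

namespace Subgraph

variable {G : SimpleGraph V} {G' : SimpleGraph W}

lemma Connected.adj_of_isBridge {H : G.Subgraph} (hH : H.Connected) {u v : V}
    (hb : G.IsBridge s(u, v)) (hu : u ∈ H.verts) (hv : v ∈ H.verts) : H.Adj u v := by
  obtain ⟨p, hp⟩ := (connected_iff_forall_exists_walk_subgraph H).mp hH |>.2 hu hv
  exact hp.2 (Walk.adj_toSubgraph_iff_mem_edges.mpr (isBridge_iff_forall_walk_mem_edges.mp hb p))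

lemma Connected.eq_of_adj_eq {H₁ H₂ : G.Subgraph} (h₁ : H₁.Connected)
    (h₂ : H₂.Connected) (hadj : H₁.Adj = H₂.Adj) {x : V} (hx₁ : x ∈ H₁.verts)
    (hx₂ : x ∈ H₂.verts) : H₁ = H₂ := by
  have verts_subset : ∀ {H H' : G.Subgraph}, H.Connected → H.Adj = H'.Adj → x ∈ H.verts →
      x ∈ H'.verts → H.verts ⊆ H'.verts := by
    intro H H' hH hadj hx hx' y hy
    obtain rfl | hyx := eq_or_ne y x
    · exact hx'
    have : Nontrivial H.verts := (Set.nontrivial_of_mem_mem_ne hy hx hyx).coe_sort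
    obtain ⟨z, hyz⟩ := hH.preconnected.exists_adj_of_nontrivial ⟨y, hy⟩
    exact H'.edge_vert (hadj ▸ hyz)
  exact Subgraph.ext
    ((verts_subset h₁ hadj hx₁ hx₂).antisymm (verts_subset h₂ hadj.symm hx₂ hx₁)) hadj

lemma Connected.exists_verts_eq_singleton {H : G.Subgraph} (hH : H.Connected)
    (hadj : ∀ a b, ¬ H.Adj a b) : ∃ x, H.verts = {x} := by
  obtain ⟨x, hx⟩ := hH.nonempty
  refine ⟨x, Set.eq_singleton_iff_unique_mem.mpr ⟨hx, fun y hy => ?_⟩⟩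
  by_contra hyx
  have : Nontrivial H.verts := (Set.nontrivial_of_mem_mem_ne hy hx hyx).coe_sort
  obtain ⟨z, hyz⟩ := hH.preconnected.exists_adj_of_nontrivial ⟨y, hy⟩
  exact hadj y z hyz

/-- The image of `H` under a weak homomorphism `f` (adjacent vertices go to adjacent or equal
ones); the edges that `f` collapses disappear. -/
def weakMap (f : V → W) (hf : ∀ ⦃a b⦄, G.Adj a b → f a ≠ f b → G'.Adj (f a) (f b))
    (H : G.Subgraph) : G'.Subgraph where
  verts := f '' H.verts
  Adj x y := x ≠ y ∧ Relation.Map H.Adj f f x y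
  adj_sub := by
    rintro _ _ ⟨hne, a, b, h, rfl, rfl⟩
    exact hf (H.adj_sub h) hne
  edge_vert := by
    rintro _ _ ⟨-, a, b, h, rfl, -⟩
    exact Set.mem_image_of_mem f (H.edge_vert h)
  symm := ⟨fun _ _ ⟨hne, a, b, h, ha, hb⟩ => ⟨hne.symm, b, a, h.symm, hb, ha⟩⟩

lemma Connected.weakMap {f : V → W}
    {hf : ∀ ⦃a b⦄, G.Adj a b → f a ≠ f b → G'.Adj (f a) (f b)} {H : G.Subgraph}
    (hH : H.Connected) : (H.weakMap f hf).Connected := by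
  set K := H.weakMap f hf
  let g : H.verts → K.verts := fun c => ⟨f c, Set.mem_image_of_mem f c.2⟩
  have hreach : ∀ a b : H.verts, K.coe.Reachable (g a) (g b) := by
    intro a b
    induction (reachable_iff_reflTransGen a b).mp (hH.preconnected a b) with
    | refl => rfl
    | @tail c d _ hcd ih =>
      refine ih.trans ?_
      by_cases hfcd : f c = f d
      · rw [show g c = g d from Subtype.ext hfcd]
      · exact Adj.reachable (⟨hfcd, _, _, hcd, rfl, rfl⟩ : K.Adj _ _)
  rw [Subgraph.connected_iff, Subgraph.preconnected_iff]
  refine ⟨fun ⟨_, a, ha, hxa⟩ ⟨_, b, hb, hyb⟩ => ?_, hH.nonempty.image f⟩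
  subst hxa hyb
  exact hreach ⟨a, ha⟩ ⟨b, hb⟩

end Subgraph

end SimpleGraph

namespace ContractEdgeAddPendant

variable {V : Type*} {G : SimpleGraph V} {u v : V}

open Classical in
noncomputable def collapse (u v : V) : V → V := Function.update id v u

@[simp] lemma collapse_right : collapse u v v = u := by simp [collapse]

lemma collapse_of_ne {x : V} (hx : x ≠ v) : collapse u v x = x := by
  simp [collapse, hx]

lemma collapse_ne_right (huv : u ≠ v) (x : V) : collapse u v x ≠ v := by
  by_cases hx : x = v
  · simpa [hx] using huv
  · simpa [collapse_of_ne hx] using hx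

lemma collapse_eq_self_of_ne_left {x : V} (hx : collapse u v x ≠ u) : collapse u v x = x :=
  collapse_of_ne fun h => hx (h ▸ collapse_right)

lemma collapse_eq_left_iff {x : V} : collapse u v x = u ↔ x = u ∨ x = v := by
  by_cases hx : x = v <;> simp [hx, collapse_of_ne]

lemma adj_collapse {a b : V} (hab : G.Adj a b) (hne : collapse u v a ≠ collapse u v b) :
    (contractEdgeAddPendant G u v).Adj (collapse u v a) (collapse u v b) := by
  rw [contractEdgeAddPendant, fromRel_adj]
  refine ⟨hne, ?_⟩
  have hba := hab.symm
  by_cases hav : a = v <;> by_cases hbv : b = v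
  · exact absurd (hav.trans hbv.symm) hab.ne
  · simp only [hav, collapse_right, collapse_of_ne hbv] at hne ⊢
    grind
  · simp only [hbv, collapse_right, collapse_of_ne hav] at hne ⊢
    grind
  · simp only [collapse_of_ne hav, collapse_of_ne hbv] at hne ⊢
    grind

lemma adj_pendant (huv : u ≠ v) : (contractEdgeAddPendant G u v).Adj u v := by
  rw [contractEdgeAddPendant, fromRel_adj]
  exact ⟨huv, by simp⟩

lemma eq_of_collapse_eq (hb : G.IsBridge s(u, v)) {a b a' b' : V} (hab : G.Adj a b)
    (hab' : G.Adj a' b') (ha : collapse u v a' = collapse u v a)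
    (hb' : collapse u v b' = collapse u v b) (hne : collapse u v a ≠ collapse u v b) :
    a' = a := by
  by_contra ha'
  have hau : collapse u v a = u := by
    by_contra h
    have h' : collapse u v a' ≠ u := ha ▸ h
    exact ha' (by rw [← collapse_eq_self_of_ne_left h', ha, collapse_eq_self_of_ne_left h])
  have hbu : collapse u v b ≠ u := fun h => hne (hau.trans h.symm)
  have hbu' : collapse u v b' ≠ u := hb' ▸ hbu
  have hbb' : b' = b := by
    rw [← collapse_eq_self_of_ne_left hbu, ← collapse_eq_self_of_ne_left hbu', hb']
  subst hbb'
  rcases collapse_eq_left_iff.mp hau with rfl | rfl <;>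
    rcases collapse_eq_left_iff.mp (ha.trans hau) with rfl | rfl
  · exact ha' rfl
  · exact hb.not_adj_of_adj hab hab'
  · exact hb.not_adj_of_adj hab' hab
  · exact ha' rfl

lemma eq_pair_of_collapse_eq {a b : V} (h : collapse u v a = collapse u v b) (hab : a ≠ b) :
    s(a, b) = s(u, v) := by
  have hau : collapse u v a = u := by
    by_contra hau
    have hbu : collapse u v b ≠ u := h ▸ hau
    exact hab (by rw [← collapse_eq_self_of_ne_left hau, h, collapse_eq_self_of_ne_left hbu])
  have ha := collapse_eq_left_iff.mp hau
  have hb := collapse_eq_left_iff.mp (h.symm.trans hau)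
  rw [Sym2.eq_iff]
  grind

lemma adj_of_weakMap_adj (hb : G.IsBridge s(u, v)) {H : G.Subgraph} {a b : V}
    (h : (H.weakMap (collapse u v) fun _ _ => adj_collapse).Adj (collapse u v a) (collapse u v b))
    (hab : G.Adj a b) : H.Adj a b := by
  obtain ⟨hne, a', b', h', ha, hb'⟩ := h
  obtain rfl := eq_of_collapse_eq hb hab (H.adj_sub h') ha hb' hne
  obtain rfl := eq_of_collapse_eq hb hab.symm (H.adj_sub h').symm hb' ha hne.symm
  exact h'

variable (u v) in
open Classical in
noncomputable def mapSubgraph (H : G.Subgraph) : (contractEdgeAddPendant G u v).Subgraph :=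
  if H.verts = {v} then (contractEdgeAddPendant G u v).singletonSubgraph v
  else if u ∈ H.verts ∧ v ∈ H.verts then
    H.weakMap (collapse u v) (fun _ _ => adj_collapse) ⊔ (⊤ : Subgraph _).induce {u, v}
  else H.weakMap (collapse u v) (fun _ _ => adj_collapse)

lemma connected_mapSubgraph (huv : u ≠ v) {H : G.Subgraph} (hH : H.Connected) :
    (mapSubgraph u v H).Connected := by
  unfold mapSubgraph
  split_ifs with hv huv'
  · exact Subgraph.singletonSubgraph_connected
  · exact Subgraph.connected_sup hH.weakMap.preconnected
      (Subgraph.top_induce_pair_connected_of_adj (adj_pendant huv)).preconnected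
      ⟨u, ⟨u, huv'.1, collapse_of_ne huv⟩, by simp⟩
  · exact hH.weakMap

lemma mapSubgraph_adj_collapse {H : G.Subgraph} {a b : V} (hab : H.Adj a b)
    (hne : collapse u v a ≠ collapse u v b) :
    (mapSubgraph u v H).Adj (collapse u v a) (collapse u v b) := by
  unfold mapSubgraph
  split_ifs with hv huv'
  · have ha := H.edge_vert hab
    have hb := H.edge_vert hab.symm
    simp only [hv, Set.mem_singleton_iff] at ha hb
    exact absurd (ha.trans hb.symm) (H.adj_sub hab).ne
  · exact Or.inl ⟨hne, a, b, hab, rfl, rfl⟩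
  · exact ⟨hne, a, b, hab, rfl, rfl⟩

lemma adj_of_mapSubgraph_adj (hb : G.IsBridge s(u, v)) (huv : u ≠ v) {H : G.Subgraph} {a b : V}
    (h : (mapSubgraph u v H).Adj (collapse u v a) (collapse u v b)) (hab : G.Adj a b) :
    H.Adj a b := by
  unfold mapSubgraph at h
  split_ifs at h with hv huv'
  · simp at h
  · rcases h with h | ⟨ha, hb', h⟩
    · exact adj_of_weakMap_adj hb h hab
    · simp only [Set.mem_insert_iff, Set.mem_singleton_iff, collapse_ne_right huv,
        or_false] at ha hb'
      exact absurd (ha.trans hb'.symm) h.ne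
  · exact adj_of_weakMap_adj hb h hab

lemma endpoints_mem_mapSubgraph_iff (huv : u ≠ v) {H : G.Subgraph} :
    u ∈ (mapSubgraph u v H).verts ∧ v ∈ (mapSubgraph u v H).verts ↔
      u ∈ H.verts ∧ v ∈ H.verts := by
  unfold mapSubgraph
  split_ifs with hv huv'
  · simp [hv, huv]
  · exact iff_of_true ⟨Or.inl ⟨u, huv'.1, collapse_of_ne huv⟩, Or.inr (by simp)⟩ huv'
  · simp only [huv', iff_false]
    rintro ⟨-, x, -, hx⟩
    exact collapse_ne_right huv x hx

lemma mapSubgraph_verts_of_verts_eq_singleton {H : G.Subgraph} {x : V} (hx : H.verts = {x}) :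
    (mapSubgraph u v H).verts = {x} := by
  unfold mapSubgraph
  by_cases hxv : x = v
  · subst hxv
    simp [hx]
  · have hv : v ∉ H.verts := by simpa [hx] using Ne.symm hxv
    rw [if_neg fun h : H.verts = {v} => hv (h ▸ Set.mem_singleton v), if_neg fun h => hv h.2]
    simp [Subgraph.weakMap, hx, collapse_of_ne hxv]

lemma adj_of_mapSubgraph_eq (hb : G.IsBridge s(u, v)) (huv : u ≠ v) {H H' : G.Subgraph}
    (hH' : H'.Connected) (heq : mapSubgraph u v H = mapSubgraph u v H') {a b : V}
    (hab : H.Adj a b) : H'.Adj a b := by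
  by_cases hne : collapse u v a = collapse u v b
  · have hpair := eq_pair_of_collapse_eq hne (H.adj_sub hab).ne
    rw [← Subgraph.mem_edgeSet, hpair] at hab ⊢
    have hmem := (endpoints_mem_mapSubgraph_iff huv).mpr ⟨H.edge_vert hab, H.edge_vert hab.symm⟩
    rw [heq, endpoints_mem_mapSubgraph_iff huv] at hmem
    exact hH'.adj_of_isBridge hb hmem.1 hmem.2
  · exact adj_of_mapSubgraph_adj hb huv (heq ▸ mapSubgraph_adj_collapse hab hne) (H.adj_sub hab)

lemma mapSubgraph_injOn (hb : G.IsBridge s(u, v)) (huv : u ≠ v) :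
    Set.InjOn (mapSubgraph u v) {H : G.Subgraph | H.Connected} := by
  intro H₁ h₁ H₂ h₂ heq
  have hadj : H₁.Adj = H₂.Adj := by
    ext a b
    exact ⟨adj_of_mapSubgraph_eq hb huv h₂ heq, adj_of_mapSubgraph_eq hb huv h₁ heq.symm⟩
  obtain ⟨x, hx₁, hx₂⟩ : ∃ x, x ∈ H₁.verts ∧ x ∈ H₂.verts := by
    by_cases hedge : ∃ a b, H₁.Adj a b
    · obtain ⟨a, b, hab⟩ := hedge
      exact ⟨a, H₁.edge_vert hab, H₂.edge_vert (hadj ▸ hab)⟩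
    · push Not at hedge
      obtain ⟨x, hx⟩ := Subgraph.Connected.exists_verts_eq_singleton h₁ hedge
      obtain ⟨y, hy⟩ := Subgraph.Connected.exists_verts_eq_singleton h₂ (hadj ▸ hedge)
      have hxy : ({x} : Set V) = {y} := by
        rw [← mapSubgraph_verts_of_verts_eq_singleton (u := u) hx,
          ← mapSubgraph_verts_of_verts_eq_singleton (u := u) hy, heq]
      exact ⟨x, hx ▸ rfl, hy ▸ hxy ▸ rfl⟩
  exact Subgraph.Connected.eq_of_adj_eq h₁ h₂ hadj hx₁ hx₂

lemma exists_connected_forall_mapSubgraph_ne (hb : G.IsBridge s(u, v)) (huv : u ≠ v) {a b : V}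
    (hua : G.Adj u a) (hav : a ≠ v) (hvb : G.Adj v b) (hbu : b ≠ u) :
    ∃ K : (contractEdgeAddPendant G u v).Subgraph,
      K.Connected ∧ ∀ H, mapSubgraph u v H ≠ K := by
  have hu : collapse u v u = u := collapse_of_ne huv
  have h₁ : collapse u v u ≠ collapse u v a := by rw [hu, collapse_of_ne hav]; exact hua.ne
  have h₂ : collapse u v v ≠ collapse u v b := by
    rw [collapse_right, collapse_of_ne hvb.ne']; exact hbu.symm
  refine ⟨_ ⊔ _, Subgraph.connected_sup
    (Subgraph.subgraphOfAdj_connected (adj_collapse hua h₁)).preconnected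
    (Subgraph.subgraphOfAdj_connected (adj_collapse hvb h₂)).preconnected
    ⟨u, by simp [hu], by simp⟩, fun H hH => ?_⟩
  have hHu : H.Adj u a := adj_of_mapSubgraph_adj hb huv (hH ▸ Or.inl (by simp)) hua
  have hHv : H.Adj v b := adj_of_mapSubgraph_adj hb huv (hH ▸ Or.inr (by simp)) hvb
  have hv := ((endpoints_mem_mapSubgraph_iff huv).mpr ⟨H.edge_vert hHu, H.edge_vert hHv⟩).2
  rw [hH] at hv
  simp only [Subgraph.verts_sup, subgraphOfAdj_verts, Set.mem_union, Set.mem_insert_iff,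
    Set.mem_singleton_iff] at hv
  grind [collapse_ne_right huv]

end ContractEdgeAddPendant

open ContractEdgeAddPendant in
/-- If `{u,v}` is a bridge of a connected graph `G` with neither endpoint a pendant
vertex, and `G'` is obtained from `G` by contracting `{u,v}` and attaching a new pendant
vertex at the merged vertex, then `F(G') > F(G)`. -/
theorem coreIndex_lt_contractEdgeAddPendant {V : Type*} [Fintype V]
    (G : SimpleGraph V) [DecidableRel G.Adj] (u v : V)
    (hconn : G.Connected) (hbridge : G.IsBridge s(u, v))
    (hu : 2 ≤ G.degree u) (hv : 2 ≤ G.degree v) :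
    coreIndex G < coreIndex (contractEdgeAddPendant G u v) := by
  have huv : u ≠ v := (hbridge.reachable_iff_adj.mp (hconn u v)).ne
  obtain ⟨a, hua, hav⟩ := exists_adj_ne_of_two_le_degree hu v
  obtain ⟨b, hvb, hbu⟩ := exists_adj_ne_of_two_le_degree hv u
  obtain ⟨K, hK, hK_ne⟩ := exists_connected_forall_mapSubgraph_ne hbridge huv hua hav hvb hbu
  refine Finite.card_lt_of_injective_of_notMem
    (fun H : {H : G.Subgraph // H.Connected} =>
      (⟨mapSubgraph u v H, connected_mapSubgraph huv H.2⟩ :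
        {K : (contractEdgeAddPendant G u v).Subgraph // K.Connected}))
    (fun H₁ H₂ h =>
      Subtype.ext (mapSubgraph_injOn hbridge huv H₁.2 H₂.2 (congrArg Subtype.val h)))
    (b := ⟨K, hK⟩) ?_
  rintro ⟨H, hH⟩
  exact hK_ne H (congrArg Subtype.val hH)
end
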